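/- For every integer p and all natural numbers q, r, the determinants satisfy the recurrence b(p, q+2, r) = 2·b(p, q+1, r) − b(p, q, r). -/
import Mathlib

/-- Entry function for the matrix `B(p,q,r)` from the paper. -/
def Bent (p : ℤ) (q r : ℕ) (i j : ℕ) : ℤ :=
  if i = 0 ∧ j = 0 then -2 * p
  else if i = j ∧ (i = 1 ∨ i = 2) then 1 - 2 * p
  else if i ≤ 2 ∧ j ≤ 2 then p
  else if 3 ≤ i ∧ i = j then 2
  else if 3 ≤ min i j ∧ max i j ≤ 2 + q ∧ max i j = min i j + 1 then -1
  else if 3 + q ≤ min i j ∧ max i j ≤ 2 + q + r ∧ max i j = min i j + 1 then -1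
  else if 1 ≤ q ∧ ((i = 2 ∧ j = 3) ∨ (i = 3 ∧ j = 2)) then -1
  else if 1 ≤ r ∧ ((i = 1 ∧ j = 3 + q) ∨ (i = 3 + q ∧ j = 1)) then -1
  else 0

lemma Bent_congr (p : ℤ) {q r q' r' i j i' j' : ℕ}
    (h1 : (i = 0 ∧ j = 0) ↔ (i' = 0 ∧ j' = 0))
    (h2 : (i = j ∧ (i = 1 ∨ i = 2)) ↔ (i' = j' ∧ (i' = 1 ∨ i' = 2)))
    (h3 : (i ≤ 2 ∧ j ≤ 2) ↔ (i' ≤ 2 ∧ j' ≤ 2))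
    (h4 : (3 ≤ i ∧ i = j) ↔ (3 ≤ i' ∧ i' = j'))
    (h5 : (3 ≤ min i j ∧ max i j ≤ 2 + q ∧ max i j = min i j + 1) ↔
          (3 ≤ min i' j' ∧ max i' j' ≤ 2 + q' ∧ max i' j' = min i' j' + 1))
    (h6 : (3 + q ≤ min i j ∧ max i j ≤ 2 + q + r ∧ max i j = min i j + 1) ↔
          (3 + q' ≤ min i' j' ∧ max i' j' ≤ 2 + q' + r' ∧ max i' j' = min i' j' + 1))
    (h7 : (1 ≤ q ∧ ((i = 2 ∧ j = 3) ∨ (i = 3 ∧ j = 2))) ↔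
          (1 ≤ q' ∧ ((i' = 2 ∧ j' = 3) ∨ (i' = 3 ∧ j' = 2))))
    (h8 : (1 ≤ r ∧ ((i = 1 ∧ j = 3 + q) ∨ (i = 3 + q ∧ j = 1))) ↔
          (1 ≤ r' ∧ ((i' = 1 ∧ j' = 3 + q') ∨ (i' = 3 + q' ∧ j' = 1)))) :
    Bent p q r i j = Bent p q' r' i' j' := by
  unfold Bent
  exact if_congr h1 rfl (if_congr h2 rfl (if_congr h3 rfl (if_congr h4 rfl
    (if_congr h5 rfl (if_congr h6 rfl (if_congr h7 rfl (if_congr h8 rfl rfl)))))))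

lemma Bent_del (p : ℤ) (q r : ℕ) {a b : ℕ} (ha : a < 3 + q + r) (hb : b < 3 + q + r) :
    Bent p (q+1) r (if a < 3 + q then a else a + 1) (if b < 3 + q then b else b + 1)
      = Bent p q r a b := by
  by_cases h1 : a < 3 + q <;> by_cases h2 : b < 3 + q <;>
    simp only [if_pos, if_neg, h1, h2, if_true, if_false] <;>
    exact Bent_congr p (by omega) (by omega) (by omega) (by omega) (by omega) (by omega)
      (by omega) (by omega)

def sig (q r k : ℕ) : ℕ := if k < 3 then k else if k < 3 + r then k + q else k - r

lemma sig_lt {q r k : ℕ} (h : k < 3 + r + q) : sig q r k < 3 + q + r := by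
  unfold sig; split_ifs <;> omega

lemma sig_comm {q r i : ℕ} (h : i < 3 + r + q) :
    sig (q+1) r i = (if sig q r i < 3 + q then sig q r i else sig q r i + 1) := by
  unfold sig; split_ifs <;> omega

lemma key (p : ℤ) (q r : ℕ) {i j : ℕ} (hi : i < 3 + r + q) (hj : j < 3 + r + q) :
    Bent p (q+1) r (sig (q+1) r i) (sig (q+1) r j) = Bent p q r (sig q r i) (sig q r j) := by
  rw [sig_comm hi, sig_comm hj]
  exact Bent_del p q r (sig_lt hi) (sig_lt hj)

lemma sig_range (q r : ℕ) {k : ℕ} (h : k < 3 + r + q) :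
    sig (q+2) r k ≤ 2 ∨ (3 ≤ sig (q+2) r k ∧ sig (q+2) r k ≤ 2 + q) ∨
      (5 + q ≤ sig (q+2) r k ∧ sig (q+2) r k ≤ 4 + q + r) := by
  unfold sig; split_ifs <;> omega

lemma sig_top1 (q r : ℕ) : sig (q+2) r (3 + r + q + 1) = 4 + q := by
  unfold sig; split_ifs <;> omega

lemma sig_top0 (q r : ℕ) : sig (q+2) r (3 + r + q) = 3 + q := by
  unfold sig; split_ifs <;> omega

lemma Bent_row0 (p : ℤ) (q r : ℕ) {m : ℕ}
    (hm : m ≤ 2 ∨ (3 ≤ m ∧ m ≤ 2 + q) ∨ (5 + q ≤ m ∧ m ≤ 4 + q + r)) :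
    Bent p (q+2) r (4 + q) m = 0 := by
  unfold Bent; split_ifs <;> omega

lemma Bent_col0 (p : ℤ) (q r : ℕ) {m : ℕ}
    (hm : m ≤ 2 ∨ (3 ≤ m ∧ m ≤ 2 + q) ∨ (5 + q ≤ m ∧ m ≤ 4 + q + r)) :
    Bent p (q+2) r m (4 + q) = 0 := by
  unfold Bent; split_ifs <;> omega

lemma Bent_diag (p : ℤ) (q r : ℕ) : Bent p (q+2) r (4 + q) (4 + q) = 2 := by
  unfold Bent; split_ifs <;> omega

lemma Bent_off1 (p : ℤ) (q r : ℕ) : Bent p (q+2) r (4 + q) (3 + q) = -1 := by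
  unfold Bent; split_ifs <;> omega

lemma Bent_off2 (p : ℤ) (q r : ℕ) : Bent p (q+2) r (3 + q) (4 + q) = -1 := by
  unfold Bent; split_ifs <;> omega

/-- The matrix `B(p,q,r)`: a symmetric `(3+q+r) × (3+q+r)` integer matrix. -/
def Bmat (p : ℤ) (q r : ℕ) : Matrix (Fin (3 + q + r)) (Fin (3 + q + r)) ℤ :=
  fun i j => Bent p q r i.val j.val

/-- `b(p,q,r) = det B(p,q,r)`. -/
def bdet (p : ℤ) (q r : ℕ) : ℤ := (Bmat p q r).det

def Cmat (p : ℤ) (q r : ℕ) : Matrix (Fin (3 + r + q)) (Fin (3 + r + q)) ℤ :=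
  fun i j => Bent p q r (sig q r i.val) (sig q r j.val)

def sigEquiv (q r : ℕ) : Fin (3 + r + q) ≃ Fin (3 + q + r) where
  toFun i := ⟨sig q r i.val, sig_lt i.isLt⟩
  invFun j := ⟨if (j : ℕ) < 3 then j else if (j : ℕ) < 3 + q then (j : ℕ) + r else (j : ℕ) - q,
    by have := j.isLt; split_ifs <;> omega⟩
  left_inv i := by
    have := i.isLt
    apply Fin.ext
    simp only [sig]
    split_ifs <;> omega
  right_inv j := by
    have := j.isLt
    apply Fin.ext
    simp only [sig]
    split_ifs <;> omega

lemma bdet_eq_cdet (p : ℤ) (q r : ℕ) : bdet p q r = (Cmat p q r).det := by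
  rw [bdet, ← Matrix.det_submatrix_equiv_self (sigEquiv q r) (Bmat p q r)]
  rfl


lemma cdet_rec (p : ℤ) (q r : ℕ) :
    (Cmat p (q+2) r).det = 2 * (Cmat p (q+1) r).det - (Cmat p q r).det := by
  set n := 3 + r + q with hn
  set A : Matrix (Fin (n+2)) (Fin (n+2)) ℤ := Cmat p (q+2) r with hA
  set m : Fin (n+2) := ⟨n, by omega⟩ with hm
  have hexp := Matrix.det_succ_row A (Fin.last (n+1))
  rw [Finset.sum_eq_add_of_mem m (Fin.last (n+1))
      (Finset.mem_univ _) (Finset.mem_univ _) (by simp [hm, Fin.ext_iff]) ?zero] at hexp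
  case zero =>
    intro c _ hc
    have hcval : (c : ℕ) < n := by
      rcases hc with ⟨h1, h2⟩
      have := c.isLt
      simp [hm, Fin.ext_iff] at h1 h2
      omega
    have h0 : A (Fin.last (n+1)) c = 0 := by
      show Bent p (q+2) r (sig (q+2) r (n+1)) (sig (q+2) r c.val) = 0
      rw [sig_top1 q r]
      exact Bent_row0 p q r (sig_range q r hcval)
    rw [h0]; ring
  -- entries of the last row
  have e1 : A (Fin.last (n+1)) m = -1 := by
    show Bent p (q+2) r (sig (q+2) r (n+1)) (sig (q+2) r n) = -1
    rw [sig_top1 q r, sig_top0 q r]; exact Bent_off1 p q r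
  have e2 : A (Fin.last (n+1)) (Fin.last (n+1)) = 2 := by
    show Bent p (q+2) r (sig (q+2) r (n+1)) (sig (q+2) r (n+1)) = 2
    rw [sig_top1 q r]; exact Bent_diag p q r
  -- the (last, last) minor is Cmat p (q+1) r
  have hsub2 : A.submatrix (Fin.last (n+1)).succAbove (Fin.last (n+1)).succAbove
      = Cmat p (q+1) r := by
    rw [Fin.succAbove_last]
    ext i j
    show Bent p (q+2) r (sig (q+2) r i.val) (sig (q+2) r j.val) = _
    exact key p (q+1) r (by have := i.isLt; omega) (by have := j.isLt; omega)
  -- the (last, m) minor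
  have hsAcol : ∀ j : Fin (n+1),
      ((m.succAbove j : Fin (n+2)) : ℕ) = if (j : ℕ) < n then (j : ℕ) else (j : ℕ) + 1 := by
    intro j
    rcases Nat.lt_or_ge (j : ℕ) n with h | h
    · rw [Fin.succAbove_of_castSucc_lt, if_pos h]
      · rfl
      · simp [Fin.lt_def, hm, h]
    · rw [Fin.succAbove_of_le_castSucc, if_neg (by omega)]
      · rfl
      · simp [Fin.le_def, hm, h]
  set E : Matrix (Fin (n+1)) (Fin (n+1)) ℤ :=
    A.submatrix (Fin.last (n+1)).succAbove m.succAbove with hEdef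
  have hEentry : ∀ i j : Fin (n+1), E i j =
      Bent p (q+2) r (sig (q+2) r i.val)
        (sig (q+2) r (if (j : ℕ) < n then (j : ℕ) else (j : ℕ) + 1)) := by
    intro i j
    rw [← hsAcol j]
    rw [hEdef, Matrix.submatrix_apply, Fin.succAbove_last]
    rfl
  have hE : E.det = -(Cmat p q r).det := by
    have hcol := Matrix.det_succ_column E (Fin.last n)
    rw [Finset.sum_eq_single_of_mem (Fin.last n) (Finset.mem_univ _) ?z] at hcol
    case z =>
      intro c _ hc
      have hcval : (c : ℕ) < n := by
        have h1 := c.isLt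
        have : (c : ℕ) ≠ n := fun h => hc (Fin.ext (by simpa using h))
        omega
      have h0 : E c (Fin.last n) = 0 := by
        rw [hEentry]
        rw [if_neg (by simp)]
        rw [show ((Fin.last n : ℕ) + 1) = n + 1 by simp]
        rw [sig_top1 q r]
        exact Bent_col0 p q r (sig_range q r hcval)
      rw [h0]; ring
    have ediag : E (Fin.last n) (Fin.last n) = -1 := by
      rw [hEentry]
      rw [if_neg (by simp)]
      rw [show ((Fin.last n : ℕ) + 1) = n + 1 by simp]
      rw [show ((Fin.last n : ℕ)) = n by simp]
      rw [sig_top1 q r, sig_top0 q r]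
      exact Bent_off2 p q r
    have hminor : E.submatrix (Fin.last n).succAbove (Fin.last n).succAbove = Cmat p q r := by
      rw [Fin.succAbove_last]
      ext i j
      rw [Matrix.submatrix_apply, hEentry]
      rw [if_pos (by simpa using j.isLt)]
      have h1 : (i : ℕ) < 3 + r + (q + 1) := by have := i.isLt; omega
      have h2 : (j : ℕ) < 3 + r + (q + 1) := by have := j.isLt; omega
      have h1' : (i : ℕ) < 3 + r + q := i.isLt
      have h2' : (j : ℕ) < 3 + r + q := j.isLt
      calc Bent p (q+2) r (sig (q+2) r ((Fin.castSucc i) : ℕ)) (sig (q+2) r (j : ℕ))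
          = Bent p (q+1) r (sig (q+1) r (i : ℕ)) (sig (q+1) r (j : ℕ)) := by
            exact key p (q+1) r (by simpa using h1) h2
        _ = Bent p q r (sig q r (i : ℕ)) (sig q r (j : ℕ)) := key p q r h1' h2'
        _ = Cmat p q r i j := rfl
    rw [ediag, hminor] at hcol
    rw [hcol]
    have : ((Fin.last n : ℕ) + (Fin.last n : ℕ)) = n + n := by simp
    rw [this, Even.neg_one_pow ⟨n, rfl⟩]
    ring
  rw [e1, e2, hE, hsub2] at hexp
  have h1 : ((Fin.last (n+1) : ℕ) + (m : ℕ)) = 2 * n + 1 := by simp [hm]; ring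
  have h2 : ((Fin.last (n+1) : ℕ) + (Fin.last (n+1) : ℕ)) = 2 * (n + 1) := by simp; ring
  rw [h1, h2, Odd.neg_one_pow ⟨n, rfl⟩, Even.neg_one_pow ⟨n+1, by ring⟩] at hexp
  refine hexp.trans ?_
  show (-1:ℤ) * -1 * -(Cmat p q r).det + 1 * 2 * (Cmat p (q+1) r).det
      = 2 * (Cmat p (q+1) r).det - (Cmat p q r).det
  ring

theorem b_recurrence_q (p : ℤ) (q r : ℕ) :
    bdet p (q + 2) r = 2 * bdet p (q + 1) r - bdet p q r := by
  rw [bdet_eq_cdet p (q+2) r, bdet_eq_cdet p (q+1) r, bdet_eq_cdet p q r]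
  exact cdet_rec p q r
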